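/- arXiv:2011.00453 — 2 statements merged into one kernel-verified Lean document; each statement's English description precedes it below -/
import Mathlib

section
/- For n ≥ 1 with Tribonacci representation e_1 e_2 ... e_r, the number of occurrences of the letter 1 in the prefix TR[0..n-1] of the Tribonacci word equals [e_1 ... e_{r-2}]_T + e_{r-1} (with the conventions that an empty word has value 0 and e_0 = 0). -/
/-- Tribonacci numbers: T 0 = 0, T 1 = 1, T 2 = 1, T (n+3) = T (n+2) + T (n+1) + T n. -/
def T : ℕ → ℕ
  | 0 => 0
  | 1 => 1
  | 2 => 1
  | n + 3 => T (n + 2) + T (n + 1) + T n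

/-- The Tribonacci morphism on letters: 0 ↦ 01, 1 ↦ 02, 2 ↦ 0. -/
def σm : ℕ → List ℕ
  | 0 => [0, 1]
  | 1 => [0, 2]
  | _ => [0]

/-- The Tribonacci morphism extended to words by concatenation. -/
def σw : List ℕ → List ℕ
  | [] => []
  | a :: t => σm a ++ σw t

/-- The Tribonacci word, the fixed point of σ beginning with 0
(σ^[n+1] [0] has length > n and each σ^[m] [0] is a prefix of the next). -/
def TR (n : ℕ) : ℕ := ((σw^[n + 1]) [0]).getD n 0

/-- Number of occurrences of the letter `a` in the factor TR[i..i+n-1]. -/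
def occ (a i n : ℕ) : ℕ := ((Finset.range n).filter (fun j => TR (i + j) = a)).card

/-- Parikh vector of the factor TR[i..i+n-1], as an element of ℤ³. -/
def ψv (i n : ℕ) : ℤ × ℤ × ℤ := ((occ 0 i n : ℤ), (occ 1 i n : ℤ), (occ 2 i n : ℤ))

/-- Relative Parikh vector f(i,n) = ψ(TR[i..i+n-1]) − ψ(TR[0..n-1]). -/
def frel (i n : ℕ) : ℤ × ℤ × ℤ := ψv i n - ψv 0 n

/-- The set A_n of relative Parikh vectors. -/
def Aset (n : ℕ) : Set (ℤ × ℤ × ℤ) := {v | ∃ i, frel i n = v}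

/-- Abelian complexity of TR: the number of distinct Parikh vectors of length-n factors. -/
noncomputable def ρab (n : ℕ) : ℕ := (Aset n).ncard

/-- Value of a binary word e₁ ⋯ e_r in the Tribonacci numeration system:
[w]_T = Σ_{1 ≤ i ≤ r} e_i T_{r+2-i}.  (Index 0 of the list is e₁.) -/
def valT (w : List ℕ) : ℕ := ∑ i ∈ Finset.range w.length, w.getD i 0 * T (w.length + 1 - i)

/-- `w` is a valid Tribonacci representation: a binary word beginning with 1
and containing no factor 111. -/
def GoodRep (w : List ℕ) : Prop :=
  w.head? = some 1 ∧ (∀ d ∈ w, d ≤ 1) ∧ ¬ ([1, 1, 1] <:+: w)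

/-- The last digit of a word, with the convention that it is 0 for the empty word. -/
def lastDigit (w : List ℕ) : ℕ := w.getD (w.length - 1) 0


/-! The prefix of `TR` of length `[u d]_T` is `σ` of the prefix of length `[u]_T`, followed by
`d` zeros. Since `σ` turns every `0` of a word into a `0` and a `1`, the numbers of zeros and
ones in the prefix of length `[w]_T` are the values of `w` with the Tribonacci weights shifted
down by one and by two places, and the doubly shifted value is `[e₁ ⋯ e_{r-2}]_T + e_{r-1}`. -/

theorem σw_append (u v : List ℕ) : σw (u ++ v) = σw u ++ σw v := by
  induction u with
  | nil => rfl
  | cons a t ih => simp [σw, ih]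

theorem List.IsPrefix.σw {u v : List ℕ} (h : u <+: v) : σw u <+: σw v := by
  obtain ⟨t, rfl⟩ := h
  exact ⟨_, (σw_append u t).symm⟩

theorem σm_eq_zero_cons (a : ℕ) : ∃ t, σm a = 0 :: t := by
  match a with
  | 0 => exact ⟨[1], rfl⟩
  | 1 => exact ⟨[2], rfl⟩
  | _ + 2 => exact ⟨[], rfl⟩

theorem length_σw (u : List ℕ) : (σw u).length = u.length + u.count 0 + u.count 1 := by
  induction u with
  | nil => rfl
  | cons a t ih => rcases a with _ | _ | a <;> simp [σw, σm, ih] <;> omega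

theorem count_zero_σw (u : List ℕ) : (σw u).count 0 = u.length := by
  induction u with
  | nil => rfl
  | cons a t ih => rcases a with _ | _ | a <;> simp [σw, σm, ih]

theorem count_one_σw (u : List ℕ) : (σw u).count 1 = u.count 0 := by
  induction u with
  | nil => rfl
  | cons a t ih => rcases a with _ | _ | a <;> simp [σw, σm, ih]

theorem iterate_σw_isPrefix_succ (k : ℕ) : σw^[k] [0] <+: σw^[k + 1] [0] := by
  induction k with
  | zero => exact ⟨[1], rfl⟩
  | succ k ih =>
    rw [Function.iterate_succ_apply', Function.iterate_succ_apply']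
    exact ih.σw

theorem iterate_σw_isPrefix_of_le {k l : ℕ} (h : k ≤ l) : σw^[k] [0] <+: σw^[l] [0] := by
  induction l, h using Nat.le_induction with
  | base => exact List.prefix_refl _
  | succ l _ ih => exact ih.trans (iterate_σw_isPrefix_succ l)

theorem lt_length_iterate_σw (k : ℕ) : k < (σw^[k] [0]).length := by
  induction k with
  | zero => simp
  | succ k ih =>
    have h0 : 0 < (σw^[k] [0]).count 0 :=
      List.count_pos_iff.mpr ((iterate_σw_isPrefix_of_le k.zero_le).subset (by simp))
    rw [Function.iterate_succ_apply', length_σw]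
    omega

theorem getD_iterate_σw {n k : ℕ} (h : n < (σw^[k] [0]).length) :
    (σw^[k] [0]).getD n 0 = TR n := by
  have hn : n < (σw^[n + 1] [0]).length := n.lt_succ_self.trans (lt_length_iterate_σw (n + 1))
  have hk := iterate_σw_isPrefix_of_le (k.le_add_right (n + 1))
  have hn' := iterate_σw_isPrefix_of_le ((n + 1).le_add_left k)
  rw [TR, List.getD_eq_getElem _ _ h, List.getD_eq_getElem _ _ hn, hk.getElem h, hn'.getElem hn]

def prefixTR (n : ℕ) : List ℕ := (List.range n).map TR

@[simp] theorem length_prefixTR (n : ℕ) : (prefixTR n).length = n := by simp [prefixTR]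

theorem occ_zero_eq_count_prefixTR (a n : ℕ) : occ a 0 n = (prefixTR n).count a := by
  show Multiset.card (Multiset.filter _ (Multiset.range n)) = _
  rw [Multiset.range, Multiset.filter_coe, Multiset.coe_card, prefixTR, List.count, List.countP_map,
    List.countP_eq_length_filter]
  simp [Function.comp_def, beq_eq_decide]

theorem prefixTR_isPrefix_iterate_σw {n k : ℕ} (h : n ≤ (σw^[k] [0]).length) :
    prefixTR n <+: σw^[k] [0] := by
  rw [List.prefix_iff_eq_take]
  apply List.ext_getElem (by simpa using h)
  intro i hi _
  rw [length_prefixTR] at hi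
  have hik : i < (σw^[k] [0]).length := hi.trans_le h
  simp [prefixTR, ← getD_iterate_σw hik, List.getElem?_eq_getElem hik]

theorem eq_prefixTR_of_isPrefix_iterate_σw {u : List ℕ} {k : ℕ} (h : u <+: σw^[k] [0]) :
    u = prefixTR u.length :=
  ((List.prefix_of_prefix_length_le (prefixTR_isPrefix_iterate_σw h.length_le) h
    (by simp)).eq_of_length (by simp)).symm

theorem σw_prefixTR_append_zero_isPrefix (m : ℕ) : σw (prefixTR m) ++ [0] <+: σw^[m + 2] [0] := by
  have h := (prefixTR_isPrefix_iterate_σw (lt_length_iterate_σw (m + 1)).le).σw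
  obtain ⟨s, hs⟩ := σm_eq_zero_cons (TR m)
  rw [← Function.iterate_succ_apply' σw, prefixTR, List.range_succ, List.map_append, σw_append] at h
  simp only [List.map_cons, List.map_nil, σw, hs, List.append_nil] at h
  exact (List.prefix_append_right_inj _).mpr (by simp) |>.trans h

theorem prefixTR_length_σw_prefixTR_add {m d : ℕ} (hd : d ≤ 1) :
    prefixTR ((σw (prefixTR m)).length + d) = σw (prefixTR m) ++ List.replicate d 0 := by
  have hrep : List.replicate d 0 <+: [0] := by interval_cases d <;> simp
  have h := ((List.prefix_append_right_inj _).mpr hrep).trans (σw_prefixTR_append_zero_isPrefix m)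
  simpa using (eq_prefixTR_of_isPrefix_iterate_σw h).symm

-- `tribSum k w` weights the last digit of `w` by `T k`, so that `valT = tribSum 2`.
def tribSum (k : ℕ) (w : List ℕ) : ℕ :=
  ∑ i ∈ Finset.range w.length, w.getD i 0 * T (k + w.length - 1 - i)

theorem tribSum_two (w : List ℕ) : tribSum 2 w = valT w :=
  Finset.sum_congr rfl fun i _ => by congr 2; omega

@[simp] theorem tribSum_nil (k : ℕ) : tribSum k [] = 0 := rfl

theorem tribSum_add_three (k : ℕ) (w : List ℕ) :
    tribSum (k + 3) w = tribSum (k + 2) w + tribSum (k + 1) w + tribSum k w := by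
  simp only [tribSum, ← Finset.sum_add_distrib]
  refine Finset.sum_congr rfl fun i hi => ?_
  have hi : i < w.length := Finset.mem_range.mp hi
  obtain ⟨j, hj⟩ : ∃ j, k + w.length - 1 - i = k + j := ⟨w.length - 1 - i, by omega⟩
  rw [show k + 3 + w.length - 1 - i = k + j + 3 by omega,
    show k + 2 + w.length - 1 - i = k + j + 2 by omega,
    show k + 1 + w.length - 1 - i = k + j + 1 by omega, hj, T]
  ring

theorem tribSum_concat (k : ℕ) (w : List ℕ) (d : ℕ) :
    tribSum k (w ++ [d]) = tribSum (k + 1) w + d * T k := by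
  simp only [tribSum, List.length_append, List.length_singleton, Finset.sum_range_succ]
  rw [List.getD_append_right _ _ _ _ le_rfl, Nat.sub_self,
    show k + (w.length + 1) - 1 - w.length = k by omega]
  congr 1
  refine Finset.sum_congr rfl fun i hi => ?_
  rw [List.getD_append _ _ _ _ (Finset.mem_range.mp hi)]
  congr 2
  omega

theorem count_prefixTR_tribSum (w : List ℕ) (hw : ∀ d ∈ w, d ≤ 1) :
    (prefixTR (tribSum 2 w)).count 0 = tribSum 1 w ∧
      (prefixTR (tribSum 2 w)).count 1 = tribSum 0 w := by
  induction w using List.reverseRecOn with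
  | nil => simp [prefixTR]
  | append_singleton u d ih =>
    obtain ⟨ih0, ih1⟩ := ih fun x hx => hw x (List.mem_append_left _ hx)
    have hd : d ≤ 1 := hw d (by simp)
    have hlen : (σw (prefixTR (tribSum 2 u))).length = tribSum 3 u := by
      rw [length_σw, ih0, ih1, length_prefixTR, tribSum_add_three 0]
    have hprefix : prefixTR (tribSum 2 (u ++ [d])) =
        σw (prefixTR (tribSum 2 u)) ++ List.replicate d 0 := by
      rw [tribSum_concat, show T 2 = 1 from rfl, mul_one, ← hlen,
        prefixTR_length_σw_prefixTR_add hd]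
    rw [hprefix, tribSum_concat, tribSum_concat]
    simp [count_zero_σw, count_one_σw, ih0, List.count_replicate, T]

theorem tribSum_zero_eq (w : List ℕ) :
    tribSum 0 w = valT w.dropLast.dropLast + lastDigit w.dropLast := by
  rcases w.eq_nil_or_concat' with rfl | ⟨u, d, rfl⟩
  · rfl
  rcases u.eq_nil_or_concat' with rfl | ⟨v, a, rfl⟩
  · rw [tribSum_concat]
    simp [T, valT, lastDigit]
  rw [tribSum_concat, tribSum_concat, tribSum_two]
  simp [lastDigit, T]

theorem count1_prefix_general (n : ℕ) (w : List ℕ) (hw : GoodRep w) (hv : valT w = n) :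
    occ 1 0 n = valT w.dropLast.dropLast + lastDigit w.dropLast := by
  rw [occ_zero_eq_count_prefixTR, ← hv, ← tribSum_two, (count_prefixTR_tribSum w hw.2.1).2,
    tribSum_zero_eq]

/-- For n ≥ 1 with Tribonacci representation e₁ ⋯ e_r,
|TR[0..n-1]|₁ = [e₁ ⋯ e_{r-2}]_T + e_{r-1} (empty word has value 0, e₀ = 0). -/
theorem count1_prefix (n : ℕ) (hn : 1 ≤ n) (w : List ℕ) (hw : GoodRep w) (hv : valT w = n) :
    occ 1 0 n = valT w.dropLast.dropLast + lastDigit w.dropLast :=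
  count1_prefix_general n w hw hv
end

section
/- For all n ≥ 1, the first coordinate of every relative Parikh vector of the Tribonacci word is in {−1,0,1}: for all i, | |TR[i..i+n-1]|_0 − |TR[0..n-1]|_0 | ≤ 1. In particular, the Tribonacci word is 1-balanced with respect to the letter 0. -/
/-!
Write `Ψ n` for the Parikh vector of the prefix of length `n`, so that
`frel x y = Ψ (x + y) - Ψ x - Ψ y`. As `TR = σ(TR)`, every position is at offset `d ∈ {0, 1}` of
the block `σ(TR u)` of some letter, and then `Ψ (blockStart u + d) = (u + d, Ψ₀ u, Ψ₁ u)`. Doing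
this for `x`, `y` and `x + y`, with blocks `u`, `v` and `w`, expresses `frel x y` through
`frel u v`, the offsets and the letters of `TR` between positions `u + v` and `w`; since relative
Parikh vectors have coordinate sum `0`, `w - (u + v)` lies in `[-1, 3]`. Hence the pair of
`frel x y` and the window `TR[x+y-1 .. x+y+2]` stays in a set of 62 pairs that is closed under
this step (checked by `decide`), and on all of them the first coordinate is in `{-1, 0, 1}`.
-/

namespace Tribonacci

lemma σw_append (l₁ l₂ : List ℕ) : σw (l₁ ++ l₂) = σw l₁ ++ σw l₂ := by
  induction l₁ with
  | nil => rfl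
  | cons a t ih => simp [σw, ih]

lemma σw_singleton (a : ℕ) : σw [a] = σm a := by simp [σw]

lemma σw_prefix {l₁ l₂ : List ℕ} (h : l₁ <+: l₂) : σw l₁ <+: σw l₂ := by
  obtain ⟨t, rfl⟩ := h
  exact ⟨σw t, (σw_append l₁ t).symm⟩

lemma length_σm_pos (a : ℕ) : 0 < (σm a).length := by
  unfold σm; split <;> simp

lemma length_σm_le_two (a : ℕ) : (σm a).length ≤ 2 := by
  unfold σm; split <;> simp

lemma length_le_length_σw (l : List ℕ) : l.length ≤ (σw l).length := by
  induction l with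
  | nil => simp
  | cons a t ih =>
    simp only [σw, List.length_append, List.length_cons]
    have := length_σm_pos a
    omega

lemma le_two_of_mem_σw {l : List ℕ} {b : ℕ} (h : b ∈ σw l) : b ≤ 2 := by
  induction l with
  | nil => simp [σw] at h
  | cons a t ih =>
    rcases List.mem_append.mp h with h | h
    · unfold σm at h; split at h <;> simp at h <;> omega
    · exact ih h

lemma iterate_σw_prefix_succ (k : ℕ) : σw^[k] [0] <+: σw^[k + 1] [0] := by
  induction k with
  | zero => exact ⟨[1], rfl⟩
  | succ k ih =>
    rw [Function.iterate_succ_apply', Function.iterate_succ_apply' σw (k + 1)]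
    exact σw_prefix ih

lemma iterate_σw_prefix {k l : ℕ} (h : k ≤ l) : σw^[k] [0] <+: σw^[l] [0] := by
  induction l, h using Nat.le_induction with
  | base => exact List.prefix_refl _
  | succ l _ ih => exact ih.trans (iterate_σw_prefix_succ l)

lemma lt_length_iterate_σw (k : ℕ) : k < (σw^[k] [0]).length := by
  induction k with
  | zero => simp
  | succ k ih =>
    obtain ⟨t, ht⟩ := iterate_σw_prefix (Nat.zero_le k)
    have := length_le_length_σw t
    rw [Function.iterate_succ_apply', ← ht]
    rw [← ht] at ih
    change k < t.length + 1 at ih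
    change k + 1 < (σw t).length + 2
    omega

lemma TR_eq_getD {k n : ℕ} (h : n < (σw^[k] [0]).length) : TR n = (σw^[k] [0]).getD n 0 := by
  have hn : n < (σw^[n + 1] [0]).length := (Nat.lt_succ_self n).trans (lt_length_iterate_σw _)
  rcases le_total k (n + 1) with hk | hk
  · obtain ⟨t, ht⟩ := iterate_σw_prefix hk
    rw [TR, ← ht, List.getD_append _ _ _ _ h]
  · obtain ⟨t, ht⟩ := iterate_σw_prefix hk
    rw [TR, ← ht, List.getD_append _ _ _ _ hn]

lemma TR_le_two (n : ℕ) : TR n ≤ 2 := by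
  have hn : n < (σw^[n + 1] [0]).length := (Nat.lt_succ_self n).trans (lt_length_iterate_σw _)
  rw [TR_eq_getD hn, List.getD_eq_getElem _ _ hn]
  refine le_two_of_mem_σw (l := σw^[n] [0]) ?_
  rw [← Function.iterate_succ_apply' σw]
  exact List.getElem_mem _

def factor (i n : ℕ) : List ℕ := (List.range n).map fun j => TR (i + j)

@[simp] lemma length_factor (i n : ℕ) : (factor i n).length = n := by simp [factor]

lemma factor_zero (i : ℕ) : factor i 0 = [] := rfl

lemma factor_one (i : ℕ) : factor i 1 = [TR i] := by simp [factor]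

lemma factor_add (i m n : ℕ) : factor i (m + n) = factor i m ++ factor (i + m) n := by
  simp only [factor, List.range_add, List.map_append, List.map_map]
  congr 1
  ext j
  simp [Nat.add_assoc]

lemma getElem_factor {i n j : ℕ} (h : j < (factor i n).length) :
    (factor i n)[j] = TR (i + j) := by
  simp [factor]

lemma getD_factor {i n d : ℕ} (h : d < n) : (factor i n).getD d 0 = TR (i + d) := by
  rw [List.getD_eq_getElem _ _ (by simpa using h), getElem_factor]

lemma le_two_of_mem_factor {i n b : ℕ} (h : b ∈ factor i n) : b ≤ 2 := by
  obtain ⟨j, -, rfl⟩ := List.mem_map.mp h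
  exact TR_le_two _

lemma factor_take {i n m : ℕ} (h : m ≤ n) : (factor i n).take m = factor i m := by
  rw [← Nat.add_sub_cancel' h, factor_add, List.take_left' (length_factor i m)]

lemma factor_drop (i n m : ℕ) : (factor i n).drop m = factor (i + m) (n - m) := by
  rcases le_total m n with h | h
  · rw [← Nat.add_sub_cancel' h, factor_add, List.drop_left' (length_factor i m),
      Nat.add_sub_cancel_left]
  · rw [List.drop_eq_nil_of_le (by simpa using h), Nat.sub_eq_zero_of_le h, factor_zero]

lemma take_drop_factor_prefix (i n k m : ℕ) :
    ((factor i n).drop k).take m <+: factor (i + k) m := by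
  rw [factor_drop]
  rcases le_total m (n - k) with h | h
  · rw [factor_take h]
  · rw [List.take_of_length_le (by simpa using h), ← Nat.add_sub_cancel' h, factor_add]
    exact List.prefix_append _ _

lemma factor_eq_take_iterate {k n : ℕ} (h : n ≤ (σw^[k] [0]).length) :
    factor 0 n = (σw^[k] [0]).take n := by
  apply List.ext_getElem (by simpa using h)
  intro j hj _
  have hjk : j < (σw^[k] [0]).length := by simp at hj; omega
  rw [getElem_factor, List.getElem_take, Nat.zero_add, TR_eq_getD hjk, List.getD_eq_getElem]

/-- As `TR = σ(TR)`, the word `TR` is the concatenation of the blocks `σ(TR j)`;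
the `j`-th block starts at `blockStart j`. -/
def blockStart (j : ℕ) : ℕ := (σw (factor 0 j)).length

lemma blockStart_zero : blockStart 0 = 0 := rfl

lemma blockStart_add (j n : ℕ) :
    blockStart (j + n) = blockStart j + (σw (factor j n)).length := by
  simp [blockStart, factor_add, σw_append]

lemma blockStart_succ (j : ℕ) : blockStart (j + 1) = blockStart j + (σm (TR j)).length := by
  rw [blockStart_add, factor_one, σw_singleton]

lemma le_blockStart (j : ℕ) : j ≤ blockStart j := by
  have := length_le_length_σw (factor 0 j)
  rwa [length_factor] at this

lemma lt_blockStart {j : ℕ} (hj : 0 < j) : j < blockStart j := by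
  have h1 : blockStart 1 = 2 := by rw [blockStart_succ 0]; rfl
  have := length_le_length_σw (factor 1 (j - 1))
  rw [length_factor] at this
  rw [show j = 1 + (j - 1) by omega, blockStart_add, h1]
  omega

lemma σw_factor_zero (j : ℕ) : σw (factor 0 j) = factor 0 (blockStart j) := by
  have hpre : σw (factor 0 j) <+: σw^[j + 1] [0] := by
    rw [factor_eq_take_iterate (k := j) (lt_length_iterate_σw j).le, Function.iterate_succ_apply']
    exact σw_prefix (List.take_prefix _ _)
  show _ = factor 0 (σw (factor 0 j)).length
  rw [factor_eq_take_iterate (k := j + 1) hpre.length_le]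
  exact List.prefix_iff_eq_take.mp hpre

lemma σw_factor (j n : ℕ) :
    σw (factor j n) = factor (blockStart j) (σw (factor j n)).length := by
  have h := σw_factor_zero (j + n)
  rw [factor_add, σw_append, σw_factor_zero j, blockStart_add, factor_add, Nat.zero_add,
    Nat.zero_add] at h
  exact List.append_cancel_left h

def BlockPos (x u d : ℕ) : Prop := d < (σm (TR u)).length ∧ blockStart u + d = x

lemma exists_blockPos (x : ℕ) : ∃ u d, BlockPos x u d := by
  induction x with
  | zero => exact ⟨0, 0, length_σm_pos _, rfl⟩
  | succ x ih =>
    obtain ⟨u, d, hd, rfl⟩ := ih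
    by_cases h : d + 1 < (σm (TR u)).length
    · exact ⟨u, d + 1, h, rfl⟩
    · refine ⟨u + 1, 0, length_σm_pos _, ?_⟩
      rw [blockStart_succ]
      omega

lemma BlockPos.offset_le_one {x u d : ℕ} (h : BlockPos x u d) : d ≤ 1 :=
  Nat.le_of_lt_succ (h.1.trans_le (length_σm_le_two _))

lemma BlockPos.lt_of_pos {x u d : ℕ} (h : BlockPos x u d) (hx : 0 < x) : u < x := by
  rcases Nat.eq_zero_or_pos u with hu | hu
  · omega
  · have := lt_blockStart hu
    have := h.2
    omega

lemma TR_blockStart_add {j d : ℕ} (hd : d < (σm (TR j)).length) :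
    TR (blockStart j + d) = (σm (TR j)).getD d 0 := by
  have h := σw_factor j 1
  rw [factor_one, σw_singleton] at h
  rw [h, getD_factor hd]

lemma TR_blockStart (j : ℕ) : TR (blockStart j) = 0 := by
  have h := TR_blockStart_add (length_σm_pos (TR j))
  unfold σm at h
  split at h <;> simpa using h

lemma TR_succ_eq_zero_of_ne_zero {k : ℕ} (h : TR k ≠ 0) : TR (k + 1) = 0 := by
  obtain ⟨u, d, hpos⟩ := exists_blockPos k
  have hd1 := hpos.offset_le_one
  obtain ⟨hd, rfl⟩ := hpos
  have hd1 : d = 1 := by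
    rcases Nat.eq_zero_or_pos d with rfl | h0
    · exact absurd (TR_blockStart u) h
    · omega
  have : blockStart u + d + 1 = blockStart (u + 1) := by
    have := length_σm_le_two (TR u)
    rw [blockStart_succ]
    omega
  rw [this, TR_blockStart]

lemma factor_blockStart_add {u d : ℕ} (hd : d < (σm (TR u)).length) (n : ℕ) :
    factor (blockStart u + d) n = ((σw (factor u n)).drop d).take n := by
  cases n with
  | zero => rfl
  | succ n =>
    have hlen : d + (n + 1) ≤ (σw (factor u (n + 1))).length := by
      rw [Nat.add_comm n 1, factor_add, factor_one, σw_append, σw_singleton, List.length_append]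
      have := length_le_length_σw (factor (u + 1) n)
      rw [length_factor] at this
      omega
    rw [σw_factor, factor_drop, factor_take (by omega)]

lemma factor_mem_of_closed {n : ℕ} {F : List (List ℕ)} (h0 : factor 0 n ∈ F)
    (hF : ∀ W ∈ F, ∀ d < 2, ((σw W).drop d).take n ∈ F) (p : ℕ) : factor p n ∈ F := by
  induction p using Nat.strong_induction_on with
  | _ p ih =>
    rcases Nat.eq_zero_or_pos p with rfl | hp
    · exact h0
    obtain ⟨u, d, hpos⟩ := exists_blockPos p
    rw [← hpos.2, factor_blockStart_add hpos.1]
    exact hF _ (ih u (hpos.lt_of_pos hp)) d (Nat.lt_succ_of_le hpos.offset_le_one)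

lemma two_mul_count_two_le (i n : ℕ) : 2 * (factor i n).count 2 ≤ n + 1 := by
  induction n using Nat.strong_induction_on generalizing i with
  | _ n ih =>
    match n with
    | 0 => simp [factor_zero]
    | 1 =>
      have := List.count_le_length (a := 2) (l := factor i 1)
      rw [length_factor] at this
      omega
    | n + 2 =>
      have hpair : (factor i 2).count 2 ≤ 1 := by
        rw [show 2 = 1 + 1 from rfl, factor_add, factor_one, factor_one]
        by_cases h : TR i = 2
        · simp [h, TR_succ_eq_zero_of_ne_zero (by omega : TR i ≠ 0)]
        · simp [h, List.count_cons]; split <;> omega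
      rw [Nat.add_comm n 2, factor_add, List.count_append]
      have := ih n (by omega) (i + 2)
      omega

def parikh (l : List ℕ) : ℤ × ℤ × ℤ := (l.count 0, l.count 1, l.count 2)

lemma parikh_append (l₁ l₂ : List ℕ) : parikh (l₁ ++ l₂) = parikh l₁ + parikh l₂ := by
  simp [parikh, List.count_append]

lemma parikh_σw (l : List ℕ) :
    parikh (σw l) = ((l.length : ℤ), (l.count 0 : ℤ), (l.count 1 : ℤ)) := by
  induction l with
  | nil => rfl
  | cons a t ih =>
    rw [show σw (a :: t) = σm a ++ σw t from rfl, parikh_append, ih]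
    match a with
    | 0 | 1 | _ + 2 => ext <;> simp [σm, parikh] <;> ring

lemma parikh_sum {l : List ℕ} (h : ∀ b ∈ l, b ≤ 2) :
    (parikh l).1 + (parikh l).2.1 + (parikh l).2.2 = l.length := by
  induction l with
  | nil => rfl
  | cons a t ih =>
    have ha := h a List.mem_cons_self
    have ht := ih fun b hb => h b (List.mem_cons_of_mem a hb)
    simp only [parikh, List.count_cons, List.length_cons] at ht ⊢
    interval_cases a <;> simp <;> omega

lemma occ_eq_count (a i n : ℕ) : occ a i n = (factor i n).count a := by
  rw [occ, Finset.card_def, Finset.filter_val, Finset.range_val, Multiset.range,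
    Multiset.filter_coe, Multiset.coe_card, factor, List.count, List.countP_map,
    List.countP_eq_length_filter]
  rfl

lemma ψv_eq_parikh (i n : ℕ) : ψv i n = parikh (factor i n) := by
  simp [ψv, parikh, occ_eq_count]

lemma ψv_zero_add (a m : ℕ) : ψv 0 (a + m) = ψv 0 a + ψv a m := by
  rw [ψv_eq_parikh, factor_add, parikh_append, ← ψv_eq_parikh, Nat.zero_add, ← ψv_eq_parikh]

lemma ψv_sum (i n : ℕ) : (ψv i n).1 + (ψv i n).2.1 + (ψv i n).2.2 = n := by
  rw [ψv_eq_parikh, parikh_sum fun _ => le_two_of_mem_factor, length_factor]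

lemma two_mul_ψv_two_le (a m : ℕ) : 2 * (ψv a m).2.2 ≤ (m : ℤ) + 1 := by
  have := two_mul_count_two_le a m
  simp only [ψv_eq_parikh, parikh]
  omega

lemma ψv_two_nonneg (a m : ℕ) : 0 ≤ (ψv a m).2.2 := by
  simp [ψv]

lemma ψv_zero_blockStart_add {u d : ℕ} (hd : d < (σm (TR u)).length) :
    ψv 0 (blockStart u + d) = ((u : ℤ) + d, (ψv 0 u).1, (ψv 0 u).2.1) := by
  have hd1 : d ≤ 1 := Nat.le_of_lt_succ (hd.trans_le (length_σm_le_two _))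
  rw [ψv_eq_parikh, factor_add, ← σw_factor_zero, parikh_append, parikh_σw, ψv_eq_parikh]
  interval_cases d
  · simp [factor_zero, parikh]
  · simp [factor_one, TR_blockStart, parikh]

lemma ψv_sub_ψv_eq_window {p k : ℕ} (hk : k ≤ 4) :
    ψv 0 (p + k) - ψv 0 (p + 1) = parikh ((factor p 4).take k) - parikh ((factor p 4).take 1) := by
  rw [ψv_zero_add, ψv_zero_add, factor_take hk, factor_take (by norm_num)]
  simp only [ψv_eq_parikh]
  abel

lemma frel_eq (i n : ℕ) : frel i n = ψv 0 (i + n) - ψv 0 i - ψv 0 n := by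
  rw [frel, ψv_zero_add]
  abel

lemma frel_sum (i n : ℕ) : (frel i n).1 + (frel i n).2.1 + (frel i n).2.2 = 0 := by
  have h₁ := ψv_sum i n
  have h₂ := ψv_sum 0 n
  simp only [frel, Prod.fst_sub, Prod.snd_sub]
  linarith

def factors4 : List (List ℕ) :=
  [[0, 0, 1, 0], [0, 1, 0, 0], [0, 1, 0, 1], [0, 1, 0, 2], [0, 2, 0, 1], [1, 0, 0, 1],
    [1, 0, 1, 0], [1, 0, 2, 0], [2, 0, 1, 0]]

lemma factor_mem_factors4 (p : ℕ) : factor p 4 ∈ factors4 :=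
  factor_mem_of_closed (by decide) (by decide) p

/-- `liftVec (frel u v) (factor p 4) k (dq - dx - dy)` is `frel x y` when `x`, `y`, `x + y`
are at offsets `dx`, `dy`, `dq` of the blocks `u`, `v`, `p + k` and `u + v = p + 1`. -/
def liftVec (f : ℤ × ℤ × ℤ) (W : List ℕ) (k : ℕ) (c : ℤ) : ℤ × ℤ × ℤ :=
  let Δ := parikh (W.take k) - parikh (W.take 1)
  ((k : ℤ) - 1 + c, f.1 + Δ.1, f.2.1 + Δ.2.1)

/-- The relative Parikh vectors `frel x y` that occur with `x + y = p + 1` and `factor p 4 = W`: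
the closure, under the step of `admissible_closed`, of the cases `x + y ≤ 2`. -/
def admissible : List ℕ → List (ℤ × ℤ × ℤ)
  | [0, 0, 1, 0] =>
    [(-1, -1, 2), (-1, 0, 1), (-1, 1, 0), (0, -1, 1), (0, 0, 0), (0, 1, -1), (1, -1, 0), (1, 0, -1)]
  | [0, 1, 0, 0] =>
    [(-1, -1, 2), (-1, 0, 1), (-1, 1, 0), (0, -1, 1), (0, 0, 0), (1, -1, 0), (1, 0, -1)]
  | [0, 1, 0, 1] => [(-1, 0, 1), (0, -1, 1), (0, 0, 0), (1, -1, 0), (1, 0, -1)]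
  | [0, 1, 0, 2] =>
    [(-1, 0, 1), (-1, 1, 0), (0, -1, 1), (0, 0, 0), (0, 1, -1), (1, -1, 0), (1, 0, -1)]
  | [0, 2, 0, 1] =>
    [(-1, 0, 1), (-1, 1, 0), (0, -1, 1), (0, 0, 0), (0, 1, -1), (1, -1, 0), (1, 0, -1)]
  | [1, 0, 0, 1] => [(-1, 0, 1), (-1, 1, 0), (0, -1, 1), (0, 0, 0), (0, 1, -1)]
  | [1, 0, 1, 0] =>
    [(-1, -1, 2), (-1, 0, 1), (-1, 1, 0), (0, -1, 1), (0, 0, 0), (0, 1, -1), (1, -1, 0), (1, 0, -1)]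
  | [1, 0, 2, 0] =>
    [(-1, 0, 1), (-1, 1, 0), (-1, 2, -1), (0, -1, 1), (0, 0, 0), (0, 1, -1), (1, 0, -1)]
  | [2, 0, 1, 0] =>
    [(-1, -1, 2), (-1, 0, 1), (-1, 1, 0), (0, -1, 1), (0, 0, 0), (0, 1, -1), (1, -1, 0), (1, 0, -1)]
  | _ => []

lemma admissible_bounds : ∀ W ∈ factors4, ∀ f ∈ admissible W,
    -1 ≤ f.1 ∧ f.1 ≤ 1 ∧ -1 ≤ f.2.2 ∧ f.2.2 ≤ 2 := by
  decide

/-- Of the new window `W'` only the letters lying inside `σ(W)` are known. -/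
lemma admissible_closed : ∀ W ∈ factors4, ∀ f ∈ admissible W, ∀ k ∈ List.range 5,
    ∀ dx ∈ List.range 2, ∀ dy ∈ List.range 2, ∀ dq ∈ List.range 2, ∀ W' ∈ factors4,
    ((σw W).drop ((σw (W.take k)).length + dq)).take 3 <+: W'.drop 1 →
    (liftVec f W k (dq - dx - dy)).1 + (liftVec f W k (dq - dx - dy)).2.1
      + (liftVec f W k (dq - dx - dy)).2.2 = 0 →
    liftVec f W k (dq - dx - dy) ∈ admissible W' := by
  decide

section Step

variable {x y u v w dx dy dq : ℕ}

lemma frel_of_blockPos (hx : BlockPos x u dx) (hy : BlockPos y v dy)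
    (hxy : BlockPos (x + y) w dq) :
    frel x y = ((w : ℤ) - (u + v) + dq - dx - dy, (frel u v).1 + (ψv 0 w - ψv 0 (u + v)).1,
      (frel u v).2.1 + (ψv 0 w - ψv 0 (u + v)).2.1) := by
  rw [frel_eq, frel_eq, ← hxy.2, ← hx.2, ← hy.2, ψv_zero_blockStart_add hx.1,
    ψv_zero_blockStart_add hy.1, ψv_zero_blockStart_add hxy.1]
  ext <;> simp <;> ring

lemma blockIndex_mem_Icc {p : ℕ} (hx : BlockPos x u dx) (hy : BlockPos y v dy)
    (hxy : BlockPos (x + y) w dq) (hp : u + v = p + 1)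
    (hf : -1 ≤ (frel u v).2.2 ∧ (frel u v).2.2 ≤ 2) : w ∈ Set.Icc p (p + 4) := by
  -- `2 (w - (u + v)) = (frel u v)₂ + (Ψ₂ w - Ψ₂ (u + v)) + dx + dy - dq`, and at most every
  -- second letter of `TR` is a `2`.
  have hs := frel_sum x y
  rw [frel_of_blockPos hx hy hxy] at hs
  have hs' := frel_sum u v
  have hw := ψv_sum 0 w
  have hq := ψv_sum 0 (u + v)
  have := hx.offset_le_one
  have := hy.offset_le_one
  have := hxy.offset_le_one
  simp only [Prod.fst_sub, Prod.snd_sub] at hs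
  rcases le_total (u + v) w with h | h
  · obtain ⟨m, rfl⟩ := Nat.exists_eq_add_of_le h
    have := two_mul_ψv_two_le (u + v) m
    have := ψv_sum (u + v) m
    rw [ψv_zero_add] at hw hs
    simp only [Prod.fst_add, Prod.snd_add] at hw hs
    push_cast at hw hs
    constructor <;> omega
  · obtain ⟨m, hm⟩ := Nat.exists_eq_add_of_le h
    have := two_mul_ψv_two_le w m
    have := ψv_two_nonneg w m
    have := ψv_sum w m
    rw [hm, ψv_zero_add] at hq hs
    simp only [Prod.fst_add, Prod.snd_add] at hq hs
    push_cast at hq hs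
    constructor <;> omega

lemma frel_mem_admissible_step {p p' : ℕ} (hx : BlockPos x u dx) (hy : BlockPos y v dy)
    (hxy : BlockPos (x + y) w dq) (hp : u + v = p + 1) (hp' : x + y = p' + 1)
    (hf : frel u v ∈ admissible (factor p 4)) : frel x y ∈ admissible (factor p' 4) := by
  have hW := factor_mem_factors4 p
  obtain ⟨-, -, hf2⟩ := admissible_bounds _ hW _ hf
  obtain ⟨hpw, hwp⟩ := blockIndex_mem_Icc hx hy hxy hp hf2
  obtain ⟨k, rfl⟩ := Nat.exists_eq_add_of_le hpw
  have hk : k ≤ 4 := by omega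
  have hlift : frel x y = liftVec (frel u v) (factor p 4) k (dq - dx - dy) := by
    have hpz : (u : ℤ) + v = p + 1 := by exact_mod_cast hp
    rw [frel_of_blockPos hx hy hxy, hp, hpz]
    simp only [liftVec, ← ψv_sub_ψv_eq_window hk]
    push_cast
    congr 1
    ring
  have hvis : ((σw (factor p 4)).drop ((σw ((factor p 4).take k)).length + dq)).take 3
      <+: (factor p' 4).drop 1 := by
    rw [factor_take hk, σw_factor p 4]
    calc _ <+: factor (blockStart p + ((σw (factor p k)).length + dq)) 3 :=
          take_drop_factor_prefix _ _ _ _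
      _ = (factor p' 4).drop 1 := by
          rw [← Nat.add_assoc, ← blockStart_add, hxy.2, hp', factor_drop]
  have hbit {z a d : ℕ} (h : BlockPos z a d) : d ∈ List.range 2 :=
    List.mem_range.mpr (Nat.lt_succ_of_le h.offset_le_one)
  rw [hlift]
  exact admissible_closed _ hW _ hf k (List.mem_range.mpr (by omega)) dx (hbit hx) dy (hbit hy)
    dq (hbit hxy) _ (factor_mem_factors4 p') hvis (hlift ▸ frel_sum x y)

end Step

theorem frel_mem_admissible (p : ℕ) :
    ∀ x y, x + y = p + 1 → frel x y ∈ admissible (factor p 4) := by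
  induction p using Nat.strong_induction_on with
  | _ p ih =>
    intro x y hxy
    obtain ⟨u, dx, hx⟩ := exists_blockPos x
    obtain ⟨v, dy, hy⟩ := exists_blockPos y
    obtain ⟨w, dq, hq⟩ := exists_blockPos (x + y)
    rcases Nat.eq_zero_or_pos (u + v) with huv | huv
    · obtain ⟨rfl, rfl⟩ : u = 0 ∧ v = 0 := by omega
      have := hx.offset_le_one
      have := hy.offset_le_one
      obtain ⟨-, rfl⟩ := hx
      obtain ⟨-, rfl⟩ := hy
      have hp : p = 0 ∨ p = 1 := by simp only [blockStart_zero] at hxy; omega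
      simp only [blockStart_zero, Nat.zero_add]
      interval_cases dx <;> interval_cases dy <;> rcases hp with rfl | rfl <;> first | omega | decide
    · obtain ⟨p₀, hp₀⟩ : ∃ p₀, u + v = p₀ + 1 := ⟨u + v - 1, by omega⟩
      have hlt : u + v < x + y := by
        have := le_blockStart u
        have := le_blockStart v
        have := hx.2
        have := hy.2
        rcases Nat.eq_zero_or_pos u with hu | hu
        · have := lt_blockStart (show 0 < v by omega); omega
        · have := lt_blockStart hu; omega
      exact frel_mem_admissible_step hx hy hq hp₀ hxy (ih p₀ (by omega) u v hp₀)

end Tribonacci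

/-- The Tribonacci word is 1-balanced with respect to the letter 0. -/
theorem TR_one_balanced_zero (n : ℕ) (hn : 1 ≤ n) (i : ℕ) :
    |(occ 0 i n : ℤ) - (occ 0 0 n : ℤ)| ≤ 1 := by
  obtain ⟨p, hp⟩ : ∃ p, i + n = p + 1 := ⟨i + n - 1, by omega⟩
  obtain ⟨h₁, h₂, -⟩ := Tribonacci.admissible_bounds _ (Tribonacci.factor_mem_factors4 p) _
    (Tribonacci.frel_mem_admissible p i n hp)
  exact abs_le.mpr ⟨h₁, h₂⟩
end
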